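/- Let G be a disconnected d-distinguishing critical graph (d ≥ 3) with c(G) connected components all isomorphic to H. If c(G) ≥ d/2, then H is a complete graph K_s, and moreover c(G) = C(d−1, s) + 1 and C(d, s) ≥ c(G), where C(·,·) denotes binomial coefficients. -/

import Mathlib

/-- A labeling with `r` labels is distinguishing if the only automorphism
preserving all labels is the identity. -/
def IsDistinguishing {V : Type*} (G : SimpleGraph V) (r : ℕ) (f : V → Fin r) : Prop :=
  ∀ φ : G ≃g G, (∀ v, f (φ v) = f v) → ∀ v, φ v = v

/-- The distinguishing number of a graph. -/
noncomputable def distNum {V : Type*} (G : SimpleGraph V) : ℕ :=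
  sInf {r : ℕ | ∃ f : V → Fin r, IsDistinguishing G r f}

/-- A graph is `d`-distinguishing critical if its distinguishing number is `d`
and no proper induced subgraph has distinguishing number `d`. -/
def DistCritical {V : Type*} (G : SimpleGraph V) (d : ℕ) : Prop :=
  distNum G = d ∧ ∀ s : Set V, s ≠ Set.univ → distNum (G.induce s) ≠ d

/-- The disjoint union of `c` copies of a graph `H`. -/
def copies {W : Type*} (c : ℕ) (H : SimpleGraph W) : SimpleGraph (Fin c × W) where
  Adj a b := a.1 = b.1 ∧ H.Adj a.2 b.2
  symm := ⟨fun a b h => ⟨h.1.symm, h.2.symm⟩⟩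
  loopless := ⟨fun a h => H.irrefl h.2⟩

/-- `numDistLab G k` is the number of inequivalent `k`-distinguishing labelings of `G`,
two labelings being equivalent when some automorphism of `G` maps one to the other. -/
noncomputable def numDistLab {V : Type*} (G : SimpleGraph V) (k : ℕ) : ℕ :=
  Nat.card (Quot (fun f g : {f : V → Fin k // IsDistinguishing G k f} =>
    ∃ φ : G ≃g G, ∀ v, f.1 (φ v) = g.1 v))


/-! If `H` had two non-adjacent vertices, their `2c ≥ d` copies would form an independent set;
any `d` of them induce an edgeless graph, whose distinguishing number is `d`, contradicting
criticality. So `H = K_s`. A labeling of `c K_s` is distinguishing iff it is injective on each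
component and distinct components receive distinct `s`-sets of labels, so `D(c K_s) = d` iff
`C(d - 1, s) < c ≤ C(d, s)`. If `c > C(d - 1, s) + 1`, the first `C(d - 1, s) + 1` components
would be a proper induced subgraph with the same distinguishing number. -/

open Function SimpleGraph

section Distinguishing

variable {V V' : Type*} {G : SimpleGraph V} {G' : SimpleGraph V'} {r d : ℕ}

lemma IsDistinguishing.comp_iso (e : G ≃g G') {f : V' → Fin r}
    (hf : IsDistinguishing G' r f) : IsDistinguishing G r (f ∘ e) := by
  intro φ hφ v
  simpa using hf (e.symm.trans (φ.trans e)) (fun w => by simpa using hφ (e.symm w)) (e v)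

lemma distNum_congr (e : G ≃g G') : distNum G = distNum G' := by
  unfold distNum
  congr 1
  ext r
  exact ⟨fun ⟨f, hf⟩ => ⟨f ∘ e.symm, hf.comp_iso e.symm⟩, fun ⟨f, hf⟩ => ⟨f ∘ e, hf.comp_iso e⟩⟩

lemma IsDistinguishing.apply_ne_of_swap [DecidableEq V] {f : V → Fin r}
    (hf : IsDistinguishing G r f) {a b : V} (hab : a ≠ b) (φ : G ≃g G)
    (hφ : ∀ v, φ v = Equiv.swap a b v) : f a ≠ f b := by
  intro hfab
  have hfix := hf φ (fun v => by rw [hφ, Equiv.swap_apply_def]; split_ifs <;> simp_all) a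
  rw [hφ, Equiv.swap_apply_left] at hfix
  exact hab hfix.symm

lemma isDistinguishing_bot_iff {f : V → Fin r} :
    IsDistinguishing (⊥ : SimpleGraph V) r f ↔ Injective f := by
  classical
  exact ⟨fun hf a b hfab => by_contra fun hab =>
      hf.apply_ne_of_swap hab ⟨Equiv.swap a b, by simp⟩ (fun _ => rfl) hfab,
    fun hf _ hφ v => hf (hφ v)⟩

lemma distNum_bot [Fintype V] : distNum (⊥ : SimpleGraph V) = Fintype.card V := by
  have hset : {r : ℕ | ∃ f : V → Fin r, Injective f} = Set.Ici (Fintype.card V) := by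
    ext r
    have hemb := Function.Embedding.nonempty_iff_card_le (α := V) (β := Fin r)
    rw [Fintype.card_fin] at hemb
    rw [Set.mem_Ici, ← hemb]
    exact ⟨fun ⟨f, hf⟩ => ⟨⟨f, hf⟩⟩, fun ⟨f⟩ => ⟨f, f.injective⟩⟩
  simp only [distNum, isDistinguishing_bot_iff, hset, csInf_Ici]

lemma distNum_induce_of_isIndepSet [Finite V] {s : Set V} (hs : G.IsIndepSet s) :
    distNum (G.induce s) = s.ncard := by
  have : Fintype s := Fintype.ofFinite s
  have hbot : G.induce s = ⊥ := by
    ext u v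
    simpa using fun h => hs u.2 v.2 h.ne h
  rw [hbot, distNum_bot, ← Nat.card_eq_fintype_card, Nat.card_coe_set_eq]

lemma DistCritical.of_iso (e : G ≃g G') (h : DistCritical G d) : DistCritical G' d := by
  refine ⟨(distNum_congr e).symm.trans h.1, fun s hs hd => h.2 (e ⁻¹' s) ?_ ?_⟩
  · intro hpre
    exact hs (Set.eq_univ_of_forall fun x => by simpa using hpre.ge (Set.mem_univ (e.symm x)))
  · have e' : G.induce (e ⁻¹' s) ≃g G'.induce s :=
      ⟨e.toEquiv.subtypeEquiv fun _ => Iff.rfl, e.map_adj_iff⟩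
    rwa [distNum_congr e']

lemma DistCritical.eq_univ_of_isIndepSet [Finite V] (h : DistCritical G d) {s : Set V}
    (hs : G.IsIndepSet s) (hd : d ≤ s.ncard) : s = Set.univ := by
  obtain ⟨t, hts, htd⟩ := Set.exists_subset_card_eq hd
  by_contra hne
  refine h.2 t (fun ht => hne (Set.eq_univ_of_univ_subset (ht ▸ hts))) ?_
  rw [distNum_induce_of_isIndepSet (Set.Pairwise.mono hts hs), htd]

end Distinguishing

section Copies

variable {W : Type*} {H : SimpleGraph W} {c d : ℕ}

def copiesEmbeddingOfLE {c' : ℕ} (h : c' ≤ c) : copies c' H ↪g copies c H where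
  toEmbedding := (Fin.castLEEmb h).prodMap (Embedding.refl W)
  map_rel_iff' := by simp [copies, Fin.castLE_inj]

lemma DistCritical.distNum_copies_ne [Nonempty W] (h : DistCritical (copies c H) d) {c' : ℕ}
    (hc' : c' < c) : distNum (copies c' H) ≠ d := by
  rw [distNum_congr (copiesEmbeddingOfLE hc'.le).isoInduceRange]
  refine h.2 _ fun hrange => ?_
  obtain ⟨x, hx⟩ := Set.eq_univ_iff_forall.1 hrange (⟨c', hc'⟩, Classical.arbitrary W)
  have hfst : (Fin.castLE hc'.le x.1 : ℕ) = c' := congrArg (fun y : Fin c × W => (y.1 : ℕ)) hx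
  rw [Fin.val_castLE] at hfst
  exact (hfst ▸ x.1.isLt).false

lemma DistCritical.eq_top_of_copies [Finite W] (hH : H.Connected) (hc : 0 < c)
    (h : DistCritical (copies c H) d) (hd : d ≤ 2 * c) : H = ⊤ := by
  ext w₁ w₂
  refine ⟨Adj.ne, fun hne => by_contra fun hnadj => ?_⟩
  set S : Set (Fin c × W) := Set.univ ×ˢ {w₁, w₂}
  have hS : (copies c H).IsIndepSet S := by
    rintro ⟨i, a⟩ ⟨-, ha⟩ ⟨j, b⟩ ⟨-, hb⟩ - ⟨-, hab⟩
    simp only [Set.mem_insert_iff, Set.mem_singleton_iff] at ha hb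
    rcases ha with rfl | rfl <;> rcases hb with rfl | rfl
    exacts [H.irrefl hab, hnadj hab, hnadj hab.symm, H.irrefl hab]
  have hcard : S.ncard = 2 * c := by
    rw [Set.ncard_prod, Set.ncard_univ, Nat.card_fin, Set.ncard_pair hne, mul_comm]
  have huniv := h.eq_univ_of_isIndepSet hS (hcard ▸ hd)
  have : Nontrivial W := ⟨⟨w₁, w₂, hne⟩⟩
  obtain ⟨w, hw⟩ := hH.preconnected.exists_adj_of_nontrivial w₁
  have hall : ∀ x, x ∈ S := fun x => huniv ▸ Set.mem_univ x
  exact hS (hall (⟨0, hc⟩, w₁)) (hall (⟨0, hc⟩, w)) (fun heq => hw.ne (congrArg Prod.snd heq))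
    ⟨rfl, hw⟩

end Copies

section CompleteCopies

variable {W : Type*} {c d p : ℕ}

lemma copies_top_adj {a b : Fin c × W} :
    (copies c (⊤ : SimpleGraph W)).Adj a b ↔ a.1 = b.1 ∧ a ≠ b :=
  ⟨fun ⟨h, hne⟩ => ⟨h, fun hab => hne (hab ▸ rfl)⟩,
    fun ⟨h, hne⟩ => ⟨h, fun h' => hne (Prod.ext h h')⟩⟩

def copiesTopAutOfFst (e : Equiv.Perm (Fin c × W)) (he : ∀ a b, (e a).1 = (e b).1 ↔ a.1 = b.1) :
    copies c (⊤ : SimpleGraph W) ≃g copies c (⊤ : SimpleGraph W) :=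
  ⟨e, by simp [copies_top_adj, he]⟩

lemma fst_apply_eq_fst_apply (φ : copies c (⊤ : SimpleGraph W) ≃g copies c (⊤ : SimpleGraph W))
    {a b : Fin c × W} (h : a.1 = b.1) : (φ a).1 = (φ b).1 := by
  by_cases hab : a = b
  · rw [hab]
  · exact (φ.map_adj_iff.2 (copies_top_adj.2 ⟨h, hab⟩)).1

def componentLabels [Fintype W] (f : Fin c × W → Fin p) (i : Fin c) : Finset (Fin p) :=
  Finset.univ.image fun w => f (i, w)

lemma exists_equiv_comp_eq_of_range_eq {α β : Type*} {g₁ g₂ : α → β} (h₁ : Injective g₁)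
    (h₂ : Injective g₂) (h : Set.range g₁ = Set.range g₂) : ∃ B : α ≃ α, ∀ x, g₂ (B x) = g₁ x :=
  ⟨(Equiv.ofInjective g₁ h₁).trans ((Equiv.setCongr h).trans (Equiv.ofInjective g₂ h₂).symm),
    fun x => by simp [Equiv.apply_ofInjective_symm]⟩

variable {f : Fin c × W → Fin p}

lemma card_componentLabels [Fintype W] {i : Fin c} (hinj : Injective fun w => f (i, w)) :
    (componentLabels f i).card = Fintype.card W :=
  (Finset.card_image_of_injective _ hinj).trans Finset.card_univ

lemma IsDistinguishing.injective_component
    (hf : IsDistinguishing (copies c (⊤ : SimpleGraph W)) p f) (i : Fin c) :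
    Injective fun w => f (i, w) := by
  classical
  intro w w' hww
  by_contra hne
  have hfst : ∀ a, (Equiv.swap (i, w) (i, w') a).1 = a.1 := fun a => by
    rw [Equiv.swap_apply_def]; split_ifs <;> simp_all
  exact hf.apply_ne_of_swap (by simpa using hne)
    (copiesTopAutOfFst _ fun a b => by rw [hfst, hfst]) (fun _ => rfl) hww

/-- Two components carrying the same label set can be exchanged by an automorphism. -/
lemma IsDistinguishing.injective_componentLabels [Fintype W] [Nonempty W]
    (hf : IsDistinguishing (copies c (⊤ : SimpleGraph W)) p f) : Injective (componentLabels f) := by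
  classical
  intro i j hij
  by_contra hne
  obtain ⟨B, hB⟩ : ∃ B : W ≃ W, ∀ w, f (j, B w) = f (i, w) := by
    refine exists_equiv_comp_eq_of_range_eq (hf.injective_component i) (hf.injective_component j) ?_
    simpa [componentLabels, Set.image_univ] using
      congrArg (fun t : Finset (Fin p) => (t : Set (Fin p))) hij
  let τ : Fin c → Equiv.Perm W := fun k => if k = i then B else if k = j then B.symm else 1
  let φ := copiesTopAutOfFst (Equiv.prodShear (Equiv.swap i j) τ)
    fun a b => (Equiv.swap i j).injective.eq_iff
  have hpres : ∀ v, f (φ v) = f v := by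
    rintro ⟨k, w⟩
    show f (Equiv.swap i j k, τ k w) = f (k, w)
    by_cases hki : k = i
    · subst hki
      simp [τ, hB]
    by_cases hkj : k = j
    · subst hkj
      simp [τ, hki, ← hB]
    · simp [τ, hki, hkj, Equiv.swap_apply_of_ne_of_ne]
  obtain ⟨w⟩ := ‹Nonempty W›
  have hfix := congrArg Prod.fst (hf φ hpres (i, w))
  simp [φ, copiesTopAutOfFst] at hfix
  exact hne hfix.symm

lemma isDistinguishing_copies_top [Fintype W] (hinj : ∀ i, Injective fun w => f (i, w))
    (hlab : Injective (componentLabels f)) :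
    IsDistinguishing (copies c (⊤ : SimpleGraph W)) p f := by
  classical
  rintro φ hφ ⟨i, w⟩
  set j := (φ (i, w)).1
  have hsub : componentLabels f i ⊆ componentLabels f j := by
    intro x hx
    obtain ⟨u, -, rfl⟩ := Finset.mem_image.1 hx
    have hu : φ (i, u) = (j, (φ (i, u)).2) := Prod.ext (fst_apply_eq_fst_apply φ rfl) rfl
    rw [← hφ (i, u), hu]
    exact Finset.mem_image_of_mem _ (Finset.mem_univ _)
  have hji : j = i := (hlab (Finset.eq_of_subset_of_card_le hsub
    (by rw [card_componentLabels (hinj i), card_componentLabels (hinj j)]))).symm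
  have hw : φ (i, w) = (i, (φ (i, w)).2) := Prod.ext hji rfl
  rw [hw, hinj i (show f (i, (φ (i, w)).2) = f (i, w) by rw [← hw, hφ])]

lemma exists_isDistinguishing_copies_top_iff [Fintype W] [Nonempty W] :
    (∃ f : Fin c × W → Fin p, IsDistinguishing (copies c (⊤ : SimpleGraph W)) p f) ↔
      c ≤ p.choose (Fintype.card W) := by
  classical
  constructor
  · rintro ⟨f, hf⟩
    let labels : Fin c → {t : Finset (Fin p) // t.card = Fintype.card W} := fun i =>
      ⟨componentLabels f i, card_componentLabels (hf.injective_component i)⟩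
    have hle := Fintype.card_le_of_injective labels fun i j h =>
      hf.injective_componentLabels (congrArg Subtype.val h)
    rwa [Fintype.card_fin, Fintype.card_finset_len, Fintype.card_fin] at hle
  · intro hc
    obtain ⟨emb⟩ : Nonempty (Fin c ↪ {t : Finset (Fin p) // t.card = Fintype.card W}) := by
      rwa [Function.Embedding.nonempty_iff_card_le, Fintype.card_fin, Fintype.card_finset_len,
        Fintype.card_fin]
    let f : Fin c × W → Fin p := fun x =>
      (emb x.1).1.orderEmbOfFin (emb x.1).2 (Fintype.equivFin W x.2)
    have hlab : ∀ i, componentLabels f i = (emb i).1 := fun i => by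
      rw [componentLabels, ← Finset.image_orderEmbOfFin_univ (emb i).1 (emb i).2,
        ← Finset.image_univ_equiv (Fintype.equivFin W), Finset.image_image]
      rfl
    refine ⟨f, isDistinguishing_copies_top (fun i => ?_)
      fun i j h => emb.injective (Subtype.ext (by rwa [hlab, hlab] at h))⟩
    exact ((emb i).1.orderEmbOfFin (emb i).2).injective.comp (Fintype.equivFin W).injective

lemma distNum_copies_top_eq_iff [Fintype W] [Nonempty W] (hd : 0 < d) :
    distNum (copies c (⊤ : SimpleGraph W)) = d ↔
      (d - 1).choose (Fintype.card W) < c ∧ c ≤ d.choose (Fintype.card W) := by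
  obtain ⟨k, rfl⟩ := Nat.exists_eq_add_one_of_ne_zero hd.ne'
  simp_rw [distNum, exists_isDistinguishing_copies_top_iff]
  rw [Nat.sInf_upward_closed_eq_succ_iff fun _ _ hk h => h.trans (Nat.choose_le_choose _ hk)]
  simp [and_comm]

end CompleteCopies

theorem stmt15_general {V W : Type*} [Fintype W] (G : SimpleGraph V)
    (H : SimpleGraph W) (d c : ℕ) (hd : 3 ≤ d)
    (hH : H.Connected) (hiso : Nonempty (G ≃g copies c H))
    (hcrit : DistCritical G d) (hbig : d ≤ 2 * c) :
    ∃ s : ℕ, Nonempty (H ≃g (⊤ : SimpleGraph (Fin s))) ∧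
      c = Nat.choose (d - 1) s + 1 ∧ c ≤ Nat.choose d s := by
  obtain ⟨e⟩ := hiso
  have hcopies := hcrit.of_iso e
  obtain rfl : H = ⊤ := hcopies.eq_top_of_copies hH (by omega) hbig
  have : Nonempty W := hH.nonempty
  obtain ⟨hlow, hup⟩ := (distNum_copies_top_eq_iff (by omega)).1 hcopies.1
  refine ⟨Fintype.card W, ⟨Iso.completeGraph (Fintype.equivFin W)⟩, ?_, hup⟩
  by_contra hne
  refine hcopies.distNum_copies_ne (c' := (d - 1).choose (Fintype.card W) + 1) (by omega) ?_
  exact (distNum_copies_top_eq_iff (by omega)).2 ⟨by omega, by omega⟩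

theorem stmt15 {V W : Type*} [Fintype V] [Fintype W] (G : SimpleGraph V)
    (H : SimpleGraph W) (d c : ℕ) (hd : 3 ≤ d) (hc : 2 ≤ c)
    (hH : H.Connected) (hiso : Nonempty (G ≃g copies c H))
    (hcrit : DistCritical G d) (hbig : d ≤ 2 * c) :
    ∃ s : ℕ, Nonempty (H ≃g (⊤ : SimpleGraph (Fin s))) ∧
      c = Nat.choose (d - 1) s + 1 ∧ c ≤ Nat.choose d s :=
  stmt15_general G H d c hd hH hiso hcrit hbig
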